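/- arXiv:2212.09210 — 4 statements merged into one kernel-verified Lean document; each statement's English description precedes it below -/
import Mathlib

section
/- Let μ₁ ≥ μ₂ ≥ μ₃ ≥ μ₄ be real numbers satisfying μ₁ + μ₂ + μ₃ + μ₄ = 0 and μ₁³ + μ₂³ + μ₃³ + μ₄³ = 0. Then μ₁ + μ₄ = 0 and μ₂ + μ₃ = 0. -/
/-! When `a + b + c + d = 0`, the sum of cubes factors as `3 (a + b) (a + c) (a + d)`, so one of
the three ways of splitting the four numbers into two pairs has both pairs summing to zero.
For ordered numbers each of these splittings forces `a + d = 0` and `b + c = 0`. -/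

theorem cube_sum_eq_of_sum_eq_zero {R : Type*} [CommRing R] {a b c d : R}
    (h : a + b + c + d = 0) :
    a ^ 3 + b ^ 3 + c ^ 3 + d ^ 3 = 3 * ((a + b) * (a + c) * (a + d)) := by
  obtain rfl : d = -(a + b + c) := by linear_combination h
  ring

theorem pair_sums_eq_zero_of_sum_eq_zero_of_cube_sum_eq_zero {a b c d : ℝ}
    (h : a + b + c + d = 0) (h₃ : a ^ 3 + b ^ 3 + c ^ 3 + d ^ 3 = 0) :
    a + b = 0 ∨ a + c = 0 ∨ a + d = 0 := by
  rw [cube_sum_eq_of_sum_eq_zero h] at h₃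
  simpa only [mul_eq_zero, three_ne_zero, false_or, or_assoc] using h₃

theorem stmt_0 (μ₁ μ₂ μ₃ μ₄ : ℝ)
    (hord : μ₁ ≥ μ₂ ∧ μ₂ ≥ μ₃ ∧ μ₃ ≥ μ₄)
    (hsum : μ₁ + μ₂ + μ₃ + μ₄ = 0)
    (hcube : μ₁ ^ 3 + μ₂ ^ 3 + μ₃ ^ 3 + μ₄ ^ 3 = 0) :
    μ₁ + μ₄ = 0 ∧ μ₂ + μ₃ = 0 := by
  obtain ⟨h₁₂, h₂₃, h₃₄⟩ := hord
  have h₂₃_zero : μ₂ + μ₃ = 0 := by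
    rcases pair_sums_eq_zero_of_sum_eq_zero_of_cube_sum_eq_zero hsum hcube with h | h | h
    · -- `μ₃ + μ₄ = 0` and `μ₃ ≥ μ₄` give `μ₃ ≥ 0`, while `μ₁ + μ₂ = 0` and `μ₁ ≥ μ₂` give `μ₂ ≤ 0`
      linarith
    · -- `μ₂ ≥ μ₃ = -μ₁` and `μ₂ = -μ₄ ≥ -μ₃ = μ₁` give `μ₂ = μ₁`
      linarith
    · linarith
  exact ⟨by linarith, h₂₃_zero⟩
end

section
/- Let t and x be real numbers with t > 1 and 0 ≤ x < 1/6. If −t² + 6t − 34 − 16/(t−1) + 18/(t+1) + (5t² + 3t + 32 + 32/(t−1))·x ≥ 0, then t ≥ 5. -/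
/-! Cleared of denominators, the left-hand side at the endpoint `x = 1/6` is
`t (t - 5) (34 t - t² - 1) / (6 (t² - 1))`, which is negative for `1 < t < 5`; and the left-hand
side is strictly increasing in `x`, its coefficient of `x` being positive for `t > 1`. -/

/-- The limit of `∇₁∇₁B₄ + ∇₄∇₄B₄` in the normalized variables `t = μ₁²/μ₂²`,
`x = a/(t+1)`. -/
noncomputable def hessianSumLimit (t x : ℝ) : ℝ :=
  -t ^ 2 + 6 * t - 34 - 16 / (t - 1) + 18 / (t + 1)
    + (5 * t ^ 2 + 3 * t + 32 + 32 / (t - 1)) * x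

variable {t : ℝ}

lemma hessianSumLimit_strictMono (ht : 1 < t) : StrictMono (hessianSumLimit t) := by
  intro x y hxy
  have hcoeff : 0 < 5 * t ^ 2 + 3 * t + 32 + 32 / (t - 1) := by
    have : 0 < 32 / (t - 1) := div_pos (by norm_num) (by linarith)
    nlinarith
  unfold hessianSumLimit
  gcongr

lemma hessianSumLimit_one_sixth (h₁ : t - 1 ≠ 0) (h₂ : t + 1 ≠ 0) :
    hessianSumLimit t (1 / 6) =
      t * (t - 5) * (34 * t - t ^ 2 - 1) / (6 * ((t - 1) * (t + 1))) := by
  unfold hessianSumLimit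
  field_simp
  ring

lemma hessianSumLimit_one_sixth_neg (ht₁ : 1 < t) (ht₅ : t < 5) : hessianSumLimit t (1 / 6) < 0 := by
  rw [hessianSumLimit_one_sixth (by linarith) (by linarith)]
  apply div_neg_of_neg_of_pos
  · have hquad : 0 < 34 * t - t ^ 2 - 1 := by nlinarith
    exact mul_neg_of_neg_of_pos (mul_neg_of_pos_of_neg (by linarith) (by linarith)) hquad
  · have : 0 < t - 1 := by linarith
    positivity

theorem stmt_3_general (t x : ℝ) (ht : 1 < t) (hx1 : x < 1 / 6)
    (h : -t ^ 2 + 6 * t - 34 - 16 / (t - 1) + 18 / (t + 1)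
        + (5 * t ^ 2 + 3 * t + 32 + 32 / (t - 1)) * x ≥ 0) :
    t ≥ 5 := by
  by_contra! ht₅
  have hlt : hessianSumLimit t x < 0 :=
    (hessianSumLimit_strictMono ht hx1).trans (hessianSumLimit_one_sixth_neg ht ht₅)
  exact lt_irrefl 0 (h.trans_lt hlt)

theorem stmt_3 (t x : ℝ) (ht : 1 < t) (hx0 : 0 ≤ x) (hx1 : x < 1 / 6)
    (h : -t ^ 2 + 6 * t - 34 - 16 / (t - 1) + 18 / (t + 1)
        + (5 * t ^ 2 + 3 * t + 32 + 32 / (t - 1)) * x ≥ 0) :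
    t ≥ 5 :=
  stmt_3_general t x ht hx1 h
end

section
/- For every real number t with 5 ≤ t ≤ 17 + 12√2, one has (t² − 6t + 34 + 16/(t−1) − 18/(t+1)) / (5t² + 3t + 32 + 32/(t−1)) ≥ 0.130729. -/
/-!
Both numerator and denominator carry a factor `t / (t - 1)`, and after cancelling it the expression
is the rational function `(t³ - 6t² + 33t + 4) / ((t + 1)(5t² - 2t + 29))`. Its minimum for
`t ≥ 5` is ≈ 0.1307290941, attained near t ≈ 9.23135, so the bound is a cubic inequality with very
little room; the certificate is built around `t (t - 9.23135)² ≥ 0`.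
-/

lemma quadratic_pos (t : ℝ) : 0 < 5 * t ^ 2 - 2 * t + 29 := by
  nlinarith [sq_nonneg (t - 1)]

lemma cubic_bound {t : ℝ} (ht : 0 ≤ t) :
    0.130729 * ((t + 1) * (5 * t ^ 2 - 2 * t + 29)) ≤ t ^ 3 - 6 * t ^ 2 + 33 * t + 4 := by
  nlinarith [mul_nonneg ht (sq_nonneg (t - 923135 / 100000))]

lemma ratio_eq {t : ℝ} (ht : 1 < t) :
    (t ^ 2 - 6 * t + 34 + 16 / (t - 1) - 18 / (t + 1)) / (5 * t ^ 2 + 3 * t + 32 + 32 / (t - 1))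
      = (t ^ 3 - 6 * t ^ 2 + 33 * t + 4) / ((t + 1) * (5 * t ^ 2 - 2 * t + 29)) := by
  have h1 : t - 1 ≠ 0 := by linarith
  have h2 : t + 1 ≠ 0 := by linarith
  have hD : 5 * t ^ 2 + 3 * t + 32 + 32 / (t - 1) ≠ 0 := by
    have : 0 < 32 / (t - 1) := div_pos (by norm_num) (by linarith)
    nlinarith
  rw [div_eq_div_iff hD (mul_ne_zero h2 (quadratic_pos t).ne')]
  field_simp
  ring

theorem stmt_5_general (t : ℝ) (ht5 : 5 ≤ t) :
    (t ^ 2 - 6 * t + 34 + 16 / (t - 1) - 18 / (t + 1))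
      / (5 * t ^ 2 + 3 * t + 32 + 32 / (t - 1)) ≥ 0.130729 := by
  rw [ratio_eq (by linarith), ge_iff_le, le_div_iff₀ (mul_pos (by linarith) (quadratic_pos t))]
  exact cubic_bound (by linarith)

theorem stmt_5 (t : ℝ) (ht5 : 5 ≤ t) (ht : t ≤ 17 + 12 * Real.sqrt 2) :
    (t ^ 2 - 6 * t + 34 + 16 / (t - 1) - 18 / (t + 1))
      / (5 * t ^ 2 + 3 * t + 32 + 32 / (t - 1)) ≥ 0.130729 :=
  stmt_5_general t ht5
end

section
/- Let t and x be real numbers with t > 1 and 0 < x < 1/6. If both −t² + 6t − 34 − 16/(t−1) + 18/(t+1) + (5t² + 3t + 32 + 32/(t−1))·x ≥ 0 and (10t − 1 − t²) + (5t² − 26t + 5)·x ≥ 0 hold, then x ≥ 0.130729; in particular 2/x < 15.3. -/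
/-!
Multiplying the first inequality by `t² - 1 > 0` turns it into `P t + Q t * x ≥ 0` with polynomials
`P`, `Q` and `Q t > 0` for `t > 1`, so it says `x ≥ -P t / Q t`. At `x = 0.130729` the polynomial
`P t + Q t * x`, written in `s = t - 1`, is a positive multiple of a square plus a positive linear
term in `s`, hence negative for every `t > 1`; so `-P t / Q t > 0.130729` for all `t > 1`.
-/

namespace ScalarCurvatureBound

def P (t : ℝ) : ℝ := (-t ^ 2 + 6 * t - 34) * (t ^ 2 - 1) - 16 * (t + 1) + 18 * (t - 1)

def Q (t : ℝ) : ℝ := (5 * t ^ 2 + 3 * t + 32) * (t ^ 2 - 1) + 32 * (t + 1)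

lemma mul_sq_sub_one_eq {t : ℝ} (ht : 1 < t) (x : ℝ) :
    (-t ^ 2 + 6 * t - 34 - 16 / (t - 1) + 18 / (t + 1)
        + (5 * t ^ 2 + 3 * t + 32 + 32 / (t - 1)) * x) * (t ^ 2 - 1) = P t + Q t * x := by
  have hm : t - 1 ≠ 0 := by linarith
  have hp : t + 1 ≠ 0 := by linarith
  unfold P Q
  field_simp
  ring

lemma Q_pos {t : ℝ} (ht : 1 < t) : 0 < Q t := by
  have hsq : 0 < t ^ 2 - 1 := by nlinarith
  unfold Q
  positivity

lemma P_add_Q_mul_threshold_neg {t : ℝ} (ht : 1 < t) : P t + Q t * 0.130729 < 0 := by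
  have key : -(P t + Q t * 0.130729)
      = 69271 / 200000 * ((t - 1) ^ 2 - 5006767 / 692710 * (t - 1)
            - 7927457490169 / 959694288200) ^ 2
        + 441628084072777 / 959694288200000000 * (t - 1)
        + 244737759728506623439 / 2659159321516088000000000 := by
    unfold P Q
    ring
  nlinarith [sq_nonneg ((t - 1) ^ 2 - 5006767 / 692710 * (t - 1) - 7927457490169 / 959694288200)]

lemma lt_of_add_mul_nonneg_of_add_mul_neg {p q x c : ℝ} (hq : 0 < q) (hx : 0 ≤ p + q * x)
    (hc : p + q * c < 0) : c < x :=
  lt_of_mul_lt_mul_left (by linarith) hq.le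

end ScalarCurvatureBound

open ScalarCurvatureBound in
theorem stmt_6_general (t x : ℝ) (ht : 1 < t)
    (h1 : -t ^ 2 + 6 * t - 34 - 16 / (t - 1) + 18 / (t + 1)
        + (5 * t ^ 2 + 3 * t + 32 + 32 / (t - 1)) * x ≥ 0) :
    x ≥ 0.130729 ∧ 2 / x < 15.3 := by
  have hPQ : 0 ≤ P t + Q t * x := by
    rw [← mul_sq_sub_one_eq ht x]
    exact mul_nonneg h1 (by nlinarith)
  have hx : 0.130729 < x :=
    lt_of_add_mul_nonneg_of_add_mul_neg (Q_pos ht) hPQ (P_add_Q_mul_threshold_neg ht)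
  refine ⟨hx.le, ?_⟩
  rw [div_lt_iff₀ (by linarith)]
  linarith

theorem stmt_6 (t x : ℝ) (ht : 1 < t) (hx0 : 0 < x) (hx1 : x < 1 / 6)
    (h1 : -t ^ 2 + 6 * t - 34 - 16 / (t - 1) + 18 / (t + 1)
        + (5 * t ^ 2 + 3 * t + 32 + 32 / (t - 1)) * x ≥ 0)
    (h2 : (10 * t - 1 - t ^ 2) + (5 * t ^ 2 - 26 * t + 5) * x ≥ 0) :
    x ≥ 0.130729 ∧ 2 / x < 15.3 :=
  stmt_6_general t x ht h1
end
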